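/- Let c > 0, κ > 0, v¹, v² ∈ ℝ, let (T̂¹,T̂²), (X̂¹,X̂²) be Euclidean-orthonormal in ℝ², and let g, L, L̲, X̂, μ be as in the acoustical null-frame setup. Then the matrix G of g in the standard basis of ℝ³ is invertible, and for every linear functional ξ on ℝ³ the inverse-metric square norm satisfies ξᵀ·G⁻¹·ξ = -(1/μ)·ξ(L)·ξ(L̲) + (ξ(X̂))², where ξ is identified with its coordinate (row) vector. -/

import Mathlib

open Matrix

/-- Acoustical metric at a point: `g(V,W) = -c²V⁰W⁰ + Σᵢ(Vⁱ - vⁱV⁰)(Wⁱ - vⁱW⁰)`. -/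
def gMet (c v1 v2 : ℝ) (V W : ℝ × ℝ × ℝ) : ℝ :=
  -(c ^ 2) * V.1 * W.1 + (V.2.1 - v1 * V.1) * (W.2.1 - v1 * W.1)
    + (V.2.2 - v2 * V.1) * (W.2.2 - v2 * W.1)

/-- Null vector `L = B - c T̂` with `B = (1, v¹, v²)` and `T̂ = (0, T̂¹, T̂²)`. -/
def Lvec (c v1 v2 T1 T2 : ℝ) : ℝ × ℝ × ℝ :=
  (((1 : ℝ), v1, v2) : ℝ × ℝ × ℝ) - c • (((0 : ℝ), T1, T2) : ℝ × ℝ × ℝ)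

/-- Left-going null vector `L̲ = c⁻¹κ L + 2T` with `T = κ T̂`. -/
noncomputable def Lbvec (c κ v1 v2 T1 T2 : ℝ) : ℝ × ℝ × ℝ :=
  (c⁻¹ * κ) • Lvec c v1 v2 T1 T2 + (2 : ℝ) • (κ • (((0 : ℝ), T1, T2) : ℝ × ℝ × ℝ))

/-- Standard basis of `ℝ³ = ℝ × ℝ × ℝ`. -/
def stdB : Fin 3 → ℝ × ℝ × ℝ := ![(1, 0, 0), (0, 1, 0), (0, 0, 1)]

/-- Matrix of the acoustical metric in the standard basis. -/
def GMat (c v1 v2 : ℝ) : Matrix (Fin 3) (Fin 3) ℝ :=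
  Matrix.of fun i j => gMet c v1 v2 (stdB i) (stdB j)

/-- A linear functional on `ℝ³` identified with its coordinate vector, applied to a vector. -/
def covApp (ξ : Fin 3 → ℝ) (V : ℝ × ℝ × ℝ) : ℝ :=
  ξ 0 * V.1 + ξ 1 * V.2.1 + ξ 2 * V.2.2

/-
Explicitly, `G⁻¹ = -c⁻² B ⊗ B + ∂₁ ⊗ ∂₁ + ∂₂ ⊗ ∂₂` (`B` is `g`-orthogonal to `∂₁, ∂₂`, on which
`g` is Euclidean, and `g(B, B) = -c²`). Since `L̲ = c⁻¹κ L + 2κT̂` and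
`L = B - cT̂`, the product `-μ⁻¹ ξ(L) ξ(L̲)` expands to `-c⁻² ξ(B)² + ξ(T̂)²`, and
`ξ(T̂)² + ξ(X̂)² = (ξ₁)² + (ξ₂)²` because `(T̂, X̂)` is an orthonormal basis of `ℝ²`.
-/

lemma GMat_eq (c v1 v2 : ℝ) :
    GMat c v1 v2 = !![v1 ^ 2 + v2 ^ 2 - c ^ 2, -v1, -v2; -v1, 1, 0; -v2, 0, 1] := by
  ext i j
  fin_cases i <;> fin_cases j <;> (simp [GMat, gMet, stdB]; try ring)

lemma det_GMat (c v1 v2 : ℝ) : (GMat c v1 v2).det = -c ^ 2 := by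
  rw [GMat_eq, Matrix.det_fin_three]
  simp only [of_apply, cons_val', cons_val_zero, cons_val_one, cons_val, cons_val_fin_one]
  ring

noncomputable def GInvMat (c v1 v2 : ℝ) : Matrix (Fin 3) (Fin 3) ℝ :=
  !![-1 / c ^ 2, -v1 / c ^ 2, -v2 / c ^ 2;
    -v1 / c ^ 2, 1 - v1 ^ 2 / c ^ 2, -(v1 * v2) / c ^ 2;
    -v2 / c ^ 2, -(v1 * v2) / c ^ 2, 1 - v2 ^ 2 / c ^ 2]

lemma GMat_mul_GInvMat {c : ℝ} (hc : c ≠ 0) (v1 v2 : ℝ) :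
    GMat c v1 v2 * GInvMat c v1 v2 = 1 := by
  rw [GMat_eq, GInvMat]
  ext i j
  fin_cases i <;> fin_cases j <;> simp [Matrix.mul_apply, Fin.sum_univ_three] <;>
    field_simp <;> ring

lemma inv_GMat {c : ℝ} (hc : c ≠ 0) (v1 v2 : ℝ) : (GMat c v1 v2)⁻¹ = GInvMat c v1 v2 :=
  Matrix.inv_eq_right_inv (GMat_mul_GInvMat hc v1 v2)

lemma dotProduct_GInvMat_mulVec (c v1 v2 : ℝ) (ξ : Fin 3 → ℝ) :
    ξ ⬝ᵥ (GInvMat c v1 v2 *ᵥ ξ)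
      = -covApp ξ (1, v1, v2) ^ 2 / c ^ 2 + ξ 1 ^ 2 + ξ 2 ^ 2 := by
  simp only [dotProduct, mulVec, GInvMat, of_apply, cons_val', cons_val_fin_one,
    Fin.sum_univ_three, cons_val_zero, cons_val_one, cons_val, covApp]
  ring

lemma covApp_Lvec_mul_covApp_Lbvec {c κ : ℝ} (hc : c ≠ 0) (hκ : κ ≠ 0) (v1 v2 T1 T2 : ℝ) (ξ : Fin 3 → ℝ) :
    -(1 / (c * κ)) * covApp ξ (Lvec c v1 v2 T1 T2) * covApp ξ (Lbvec c κ v1 v2 T1 T2)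
      = -covApp ξ (1, v1, v2) ^ 2 / c ^ 2 + covApp ξ (0, T1, T2) ^ 2 := by
  simp only [covApp, Lvec, Lbvec, Prod.smul_mk, Prod.mk_sub_mk, Prod.mk_add_mk, smul_eq_mul]
  field_simp
  ring

lemma orthonormal_columns {T1 T2 X1 X2 : ℝ} (hT : T1 ^ 2 + T2 ^ 2 = 1)
    (hX : X1 ^ 2 + X2 ^ 2 = 1) (hTX : T1 * X1 + T2 * X2 = 0) :
    T1 ^ 2 + X1 ^ 2 = 1 ∧ T2 ^ 2 + X2 ^ 2 = 1 ∧ T1 * T2 + X1 * X2 = 0 := by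
  have hrows : !![T1, T2; X1, X2] * (!![T1, T2; X1, X2])ᵀ = 1 := by
    ext i j
    fin_cases i <;> fin_cases j <;>
      simp [Matrix.mul_apply, ← sq, hT, hX, hTX, mul_comm X1, mul_comm X2]
  have hcols := congrFun₂ (mul_eq_one_comm.mp hrows :
    (!![T1, T2; X1, X2])ᵀ * !![T1, T2; X1, X2] = 1)
  refine ⟨?_, ?_, ?_⟩
  · simpa [Matrix.mul_apply, ← sq] using hcols 0 0
  · simpa [Matrix.mul_apply, ← sq] using hcols 1 1
  · simpa [Matrix.mul_apply] using hcols 0 1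

lemma sq_add_sq_of_orthonormal {T1 T2 X1 X2 : ℝ} (hT : T1 ^ 2 + T2 ^ 2 = 1)
    (hX : X1 ^ 2 + X2 ^ 2 = 1) (hTX : T1 * X1 + T2 * X2 = 0) (a b : ℝ) :
    (a * T1 + b * T2) ^ 2 + (a * X1 + b * X2) ^ 2 = a ^ 2 + b ^ 2 := by
  obtain ⟨h1, h2, h12⟩ := orthonormal_columns hT hX hTX
  linear_combination a ^ 2 * h1 + b ^ 2 * h2 + 2 * a * b * h12

/-- **Inverse acoustical metric in the null frame**: the matrix `G` of `g` is invertible and,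
for every linear functional `ξ`, `ξᵀ G⁻¹ ξ = -(1/μ) ξ(L) ξ(L̲) + (ξ(X̂))²` with `μ = cκ`. -/
theorem stmt_11 (c κ v1 v2 T1 T2 X1 X2 : ℝ) (hc : 0 < c) (hκ : 0 < κ)
    (hT : T1 ^ 2 + T2 ^ 2 = 1) (hX : X1 ^ 2 + X2 ^ 2 = 1)
    (hTX : T1 * X1 + T2 * X2 = 0) :
    IsUnit (GMat c v1 v2).det
    ∧ ∀ ξ : Fin 3 → ℝ,
        ξ ⬝ᵥ ((GMat c v1 v2)⁻¹ *ᵥ ξ)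
          = -(1 / (c * κ)) * covApp ξ (Lvec c v1 v2 T1 T2)
              * covApp ξ (Lbvec c κ v1 v2 T1 T2)
            + covApp ξ (0, X1, X2) ^ 2 := by
  refine ⟨by simp [det_GMat, hc.ne'], fun ξ => ?_⟩
  rw [inv_GMat hc.ne', dotProduct_GInvMat_mulVec, covApp_Lvec_mul_covApp_Lbvec hc.ne' hκ.ne']
  have hparseval := sq_add_sq_of_orthonormal hT hX hTX (ξ 1) (ξ 2)
  simp only [covApp] at hparseval ⊢
  linear_combination -hparseval
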